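/- Let (s_n)_{n=1}^∞ be the summing basis of c₀, where s_n = e_1 + e_2 + … + e_n and (e_n) is the unit vector basis of c₀. Then bc₁((s_n)) = 1. -/

import Mathlib

open Filter Metric NormedSpace Set Topology

noncomputable section

variable {E : Type*} [NormedAddCommGroup E] [NormedSpace ℝ E]

/-- `f` is the sequence of coordinate functionals of the Schauder basis `x`:
every vector has an expansion along `x`, and such expansions are unique. -/
structure IsSchauderBasis (x : ℕ → E) (f : ℕ → E →L[ℝ] ℝ) : Prop where
  expand : ∀ v : E,
    Tendsto (fun n => ∑ i ∈ Finset.range n, f i v • x i) atTop (𝓝 v)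
  unique : ∀ (a : ℕ → ℝ) (v : E),
    Tendsto (fun n => ∑ i ∈ Finset.range n, a i • x i) atTop (𝓝 v) → ∀ i, a i = f i v

/-- the `n`-th basis projection `P_n`. -/
def basisProj (x : ℕ → E) (f : ℕ → E →L[ℝ] ℝ) (n : ℕ) : E →L[ℝ] E :=
  ∑ i ∈ Finset.range n, (f i).smulRight (x i)

/-- closed linear span of `{y i : i ≥ n}`. -/
def tailSpan (y : ℕ → E) (n : ℕ) : Submodule ℝ E :=
  (Submodule.span ℝ (y '' {i | n ≤ i})).topologicalClosure

/-- `‖g‖_n` : the norm of the restriction of `g` to the closed span of the tail of `y`. -/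
def tailNorm (y : ℕ → E) (g : E →L[ℝ] ℝ) (n : ℕ) : ℝ :=
  ‖g.comp (tailSpan y n).subtypeL‖

/-- the quantity `sh` measuring how far a basic sequence is from being shrinking. -/
def sh (y : ℕ → E) : ℝ :=
  sSup ((fun g : E →L[ℝ] ℝ => limsup (tailNorm y g) atTop) '' {g | ‖g‖ ≤ 1})

/-- non-symmetrised Hausdorff distance `d̂(A,B)`. -/
def hdist (A B : Set E) : ℝ := sSup ((fun a => infDist a B) '' A)

/-- ordinary distance between two sets. -/
def setDist (A B : Set E) : ℝ := sInf {d : ℝ | ∃ a ∈ A, ∃ b ∈ B, d = dist a b}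

/-- `ca` measures how far a sequence is from being norm-Cauchy. -/
def ca (z : ℕ → E) : ℝ :=
  ⨅ n : ℕ, sSup {d : ℝ | ∃ k, n ≤ k ∧ ∃ l, n ≤ l ∧ d = ‖z k - z l‖}

/-- measure of non-separability. -/
def sep (A : Set E) : ℝ :=
  sInf {ε : ℝ | 0 < ε ∧ ∃ C : Set E, C.Countable ∧ ∀ a ∈ A, ∃ c ∈ C, ‖a - c‖ ≤ ε}

/-- `V`: the closed linear span of the coordinate functionals. -/
def dualSpan (g : ℕ → E →L[ℝ] ℝ) : Submodule ℝ (StrongDual ℝ E) :=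
  (Submodule.span ℝ (Set.range g)).topologicalClosure

lemma mem_dualSpan (g : ℕ → E →L[ℝ] ℝ) (i : ℕ) : g i ∈ dualSpan g :=
  Submodule.le_topologicalClosure _ (Submodule.subset_span ⟨i, rfl⟩)

/-- the quantity `bc₁` measuring non-bounded-completeness. -/
def bc1 (y : ℕ → E) : ℝ :=
  sSup {c : ℝ | ∃ a : ℕ → ℝ,
    (∀ n, ‖∑ i ∈ Finset.range n, a i • y i‖ ≤ 1) ∧
    c = ca (fun n => ∑ i ∈ Finset.range n, a i • y i)}

/-- the quantity `bc₂`. -/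
def bc2 (y : ℕ → E) (g : ℕ → E →L[ℝ] ℝ) : ℝ :=
  sSup {c : ℝ | ∃ φ : ↥(dualSpan g) →L[ℝ] ℝ,
    @norm (↥(dualSpan g) →L[ℝ] ℝ)
      (@ContinuousLinearMap.hasOpNorm ℝ ℝ ↥(dualSpan g) ℝ _ _ _ _ _ _ (RingHom.id ℝ)) φ ≤ 1 ∧
    c = ca (fun n => ∑ i ∈ Finset.range n, φ ⟨g i, mem_dualSpan g i⟩ • y i)}

/-- the quantity `bc₃`. -/
def bc3 (y : ℕ → E) (g : ℕ → E →L[ℝ] ℝ) : ℝ :=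
  sSup {c : ℝ | ∃ Φ : StrongDual ℝ (StrongDual ℝ E), ‖Φ‖ ≤ 1 ∧
    c = ca (fun n => ∑ i ∈ Finset.range n, Φ (g i) • y i)}

/-- `α_Y(X)`: measures how well `Y` embeds isomorphically into `X`. -/
def alpha (Y X : Type*) [NormedAddCommGroup Y] [NormedSpace ℝ Y]
    [NormedAddCommGroup X] [NormedSpace ℝ X] : ℝ :=
  sSup {c : ℝ | ∃ T : Y →L[ℝ] X, ‖T‖ ≤ 1 ∧ ∀ y : Y, c * ‖y‖ ≤ ‖T y‖}

/-- `β_Y(X)`: measures how well `Y` embeds complementably into `X`. -/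
def beta (Y X : Type*) [NormedAddCommGroup Y] [NormedSpace ℝ Y]
    [NormedAddCommGroup X] [NormedSpace ℝ X] : ℝ :=
  sSup {c : ℝ | ∃ (A : X →L[ℝ] Y) (B : Y →L[ℝ] X),
    A.comp B = ContinuousLinearMap.id ℝ Y ∧ c * (‖A‖ * ‖B‖) ≤ 1}

/-- weak-star closure of a subset of the bidual. -/
def wstarClosure {X : Type*} [NormedAddCommGroup X] [NormedSpace ℝ X]
    (S : Set (StrongDual ℝ (StrongDual ℝ X))) : Set (StrongDual ℝ (StrongDual ℝ X)) :=
  {z | StrongDual.toWeakDual z ∈ closure (StrongDual.toWeakDual '' S)}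

/-- the measure of weak non-compactness `wk_X(A)`. -/
def wk (X : Type*) [NormedAddCommGroup X] [NormedSpace ℝ X] (A : Set X) : ℝ :=
  hdist (wstarClosure ((inclusionInDoubleDual ℝ X) '' A))
    (Set.range (inclusionInDoubleDual ℝ X))

/-- weak-star cluster points in the bidual of a sequence in `X`. -/
def wclust {X : Type*} [NormedAddCommGroup X] [NormedSpace ℝ X] (u : ℕ → X) :
    Set (StrongDual ℝ (StrongDual ℝ X)) :=
  {z | MapClusterPt (StrongDual.toWeakDual z) atTop
      (fun n => StrongDual.toWeakDual (inclusionInDoubleDual ℝ X (u n)))}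

/-- the measure of weak non-compactness `wck_X(A)`. -/
def wck (X : Type*) [NormedAddCommGroup X] [NormedSpace ℝ X] (A : Set X) : ℝ :=
  sSup {c : ℝ | ∃ u : ℕ → X, (∀ n, u n ∈ A) ∧
    c = setDist (wclust u) (Set.range (inclusionInDoubleDual ℝ X))}


/-- the canonical map `j : X → V*` for a subspace `V` of the dual,
`⟨j v, x*⟩ = x*(v)`. -/
def jfun {X : Type*} [NormedAddCommGroup X] [NormedSpace ℝ X]
    (V : Submodule ℝ (StrongDual ℝ X)) (v : X) : ↥V →L[ℝ] ℝ :=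
  (inclusionInDoubleDual ℝ X v).comp V.subtypeL

/-- the space `ℓ₁` of absolutely summable real sequences. -/
abbrev ell1 : Type := lp (fun _ : ℕ => ℝ) 1

/-- the space `c₀` of real sequences converging to zero, with the sup norm. -/
abbrev czero : Type := ZeroAtInftyContinuousMap ℕ ℝ

end

/-- the summing basis of `c₀`: `summingBasis n = e₁ + ⋯ + e_{n+1}` has its first `n+1`
coordinates equal to `1` and the remaining ones equal to `0`. -/
def summingBasis (n : ℕ) : czero :=
  ⟨⟨fun k => if k ≤ n then (1 : ℝ) else 0, continuous_of_discreteTopology⟩, by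
    rw [cocompact_eq_atTop]
    refine Tendsto.congr' ?_ tendsto_const_nhds
    filter_upwards [eventually_ge_atTop (n + 1)] with k hk
    simp [(Nat.lt_of_succ_le hk).not_ge]⟩

open ZeroAtInfty

/-!
The coordinates of `∑_{i<n} aᵢ sᵢ` are the tail sums `∑_{j ≤ i < n} aᵢ`, and for `l ≤ k` the
coordinates of the difference of the `k`-th and `l`-th partial sums are again tail sums of the
`k`-th one. So consecutive partial sums of a coefficient sequence admissible for `bc₁` are all
within distance `1` of each other, whence `bc₁((sₙ)) ≤ 1`. The alternating coefficients
`aᵢ = (-1)ⁱ` are admissible, their tail sums being `0` or `±1`, while consecutive partial sums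
differ by `±sₙ`, of norm `1`: their `ca` is `1`.
-/

namespace ZeroAtInftyContinuousMap

variable {α β : Type*} [TopologicalSpace α] [SeminormedAddCommGroup β]

theorem norm_le_iff_of_nonempty [Nonempty α] {f : C₀(α, β)} {M : ℝ} :
    ‖f‖ ≤ M ↔ ∀ x, ‖f x‖ ≤ M := by
  rw [← norm_toBCF_eq_norm, BoundedContinuousFunction.norm_le_of_nonempty]
  rfl

theorem norm_apply_le (f : C₀(α, β)) (x : α) : ‖f x‖ ≤ ‖f‖ :=
  f.toBCF.norm_coe_le_norm x

end ZeroAtInftyContinuousMap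

section CauchyDefect

variable {E : Type*} [NormedAddCommGroup E]

theorem ca_le_of_norm_sub_le {z : ℕ → E} {C : ℝ} (h : ∀ k l, ‖z k - z l‖ ≤ C) : ca z ≤ C := by
  refine (ciInf_le ⟨0, ?_⟩ 0).trans (csSup_le ⟨_, 0, le_rfl, 0, le_rfl, rfl⟩ ?_)
  · rintro _ ⟨n, rfl⟩
    exact le_csSup ⟨C, by rintro _ ⟨k, -, l, -, rfl⟩; exact h k l⟩
      ⟨n, le_rfl, n, le_rfl, by simp⟩
  · rintro _ ⟨k, -, l, -, rfl⟩
    exact h k l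

theorem le_ca_of_frequently {z : ℕ → E} {c C : ℝ} (hC : ∀ k l, ‖z k - z l‖ ≤ C)
    (h : ∀ n, ∃ k ≥ n, ∃ l ≥ n, c ≤ ‖z k - z l‖) : c ≤ ca z := by
  refine le_ciInf fun n => ?_
  obtain ⟨k, hk, l, hl, hc⟩ := h n
  exact hc.trans <| le_csSup ⟨C, by rintro _ ⟨k, -, l, -, rfl⟩; exact hC k l⟩ ⟨k, hk, l, hl, rfl⟩

variable [NormedSpace ℝ E]

theorem ca_partialSums_le_two {y : ℕ → E} {a : ℕ → ℝ}
    (ha : ∀ n, ‖∑ i ∈ Finset.range n, a i • y i‖ ≤ 1) :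
    ca (fun n => ∑ i ∈ Finset.range n, a i • y i) ≤ 2 :=
  ca_le_of_norm_sub_le fun k l => (norm_sub_le _ _).trans (by linarith [ha k, ha l])

theorem le_bc1 {y : ℕ → E} {a : ℕ → ℝ} (ha : ∀ n, ‖∑ i ∈ Finset.range n, a i • y i‖ ≤ 1) :
    ca (fun n => ∑ i ∈ Finset.range n, a i • y i) ≤ bc1 y :=
  le_csSup ⟨2, by rintro _ ⟨b, hb, rfl⟩; exact ca_partialSums_le_two hb⟩ ⟨a, ha, rfl⟩

theorem bc1_le {y : ℕ → E} {C : ℝ}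
    (h : ∀ a : ℕ → ℝ, (∀ n, ‖∑ i ∈ Finset.range n, a i • y i‖ ≤ 1) →
      ca (fun n => ∑ i ∈ Finset.range n, a i • y i) ≤ C) :
    bc1 y ≤ C :=
  csSup_le ⟨_, 0, by simp, rfl⟩ (by rintro _ ⟨a, ha, rfl⟩; exact h a ha)

end CauchyDefect

theorem summingBasis_apply (n k : ℕ) : summingBasis n k = if k ≤ n then 1 else 0 :=
  rfl

theorem partialSum_summingBasis_apply (a : ℕ → ℝ) (n j : ℕ) :
    (∑ i ∈ Finset.range n, a i • summingBasis i) j = ∑ i ∈ Finset.Ico j n, a i := by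
  refine (map_sum (AddMonoidHom.mk' (fun f : czero => f j) fun _ _ => rfl) _ _).trans ?_
  simp only [AddMonoidHom.mk'_apply, ZeroAtInftyContinuousMap.coe_smul, Pi.smul_apply,
    smul_eq_mul, summingBasis_apply, mul_ite, mul_one, mul_zero, ← Finset.sum_filter,
    Finset.range_eq_Ico, Finset.Ico_filter_le, Nat.zero_max]

theorem norm_partialSum_summingBasis_le_iff (a : ℕ → ℝ) (n : ℕ) {M : ℝ} :
    ‖∑ i ∈ Finset.range n, a i • summingBasis i‖ ≤ M ↔
      ∀ j, |∑ i ∈ Finset.Ico j n, a i| ≤ M := by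
  simp only [ZeroAtInftyContinuousMap.norm_le_iff_of_nonempty, partialSum_summingBasis_apply,
    Real.norm_eq_abs]

theorem norm_sub_partialSum_summingBasis_le (a : ℕ → ℝ) {k l : ℕ} (hlk : l ≤ k) :
    ‖∑ i ∈ Finset.range k, a i • summingBasis i - ∑ i ∈ Finset.range l, a i • summingBasis i‖ ≤
      ‖∑ i ∈ Finset.range k, a i • summingBasis i‖ := by
  refine ZeroAtInftyContinuousMap.norm_le_iff_of_nonempty.2 fun j => ?_
  have hdiff : (∑ i ∈ Finset.range k, a i • summingBasis i -
      ∑ i ∈ Finset.range l, a i • summingBasis i) j =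
      (∑ i ∈ Finset.range k, a i • summingBasis i) (max j l) := by
    simp only [ZeroAtInftyContinuousMap.coe_sub, Pi.sub_apply, partialSum_summingBasis_apply]
    rcases le_total l j with hj | hj
    · simp [max_eq_left hj, Finset.Ico_eq_empty_of_le hj]
    · rw [max_eq_right hj, ← Finset.sum_Ico_consecutive a hj hlk, add_sub_cancel_left]
  rw [hdiff]
  exact ZeroAtInftyContinuousMap.norm_apply_le _ _

theorem norm_sub_partialSums_summingBasis_le_one {a : ℕ → ℝ}
    (ha : ∀ n, ‖∑ i ∈ Finset.range n, a i • summingBasis i‖ ≤ 1) (k l : ℕ) :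
    ‖∑ i ∈ Finset.range k, a i • summingBasis i - ∑ i ∈ Finset.range l, a i • summingBasis i‖ ≤
      1 := by
  rcases le_total l k with hlk | hkl
  · exact (norm_sub_partialSum_summingBasis_le a hlk).trans (ha k)
  · rw [norm_sub_rev]
    exact (norm_sub_partialSum_summingBasis_le a hkl).trans (ha l)

theorem norm_summingBasis (n : ℕ) : ‖summingBasis n‖ = 1 := by
  refine le_antisymm (ZeroAtInftyContinuousMap.norm_le_iff_of_nonempty.2 fun j => ?_) ?_
  · by_cases hj : j ≤ n <;> simp [summingBasis_apply, hj]
  · simpa [summingBasis_apply] using ZeroAtInftyContinuousMap.norm_apply_le (summingBasis n) 0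

theorem abs_sum_Ico_neg_one_pow_le_one (j n : ℕ) : |∑ i ∈ Finset.Ico j n, (-1 : ℝ) ^ i| ≤ 1 := by
  rcases le_total n j with hnj | hjn
  · simp [Finset.Ico_eq_empty_of_le hnj]
  · rw [Finset.sum_Ico_eq_sub _ hjn, neg_one_geom_sum, neg_one_geom_sum]
    split_ifs <;> norm_num

theorem norm_partialSum_alternating_summingBasis_le_one (n : ℕ) :
    ‖∑ i ∈ Finset.range n, (-1 : ℝ) ^ i • summingBasis i‖ ≤ 1 :=
  (norm_partialSum_summingBasis_le_iff _ n).2 fun j => abs_sum_Ico_neg_one_pow_le_one j n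

/-- for the summing basis `(sₙ)` of `c₀`, `bc₁((sₙ)) = 1`. -/
theorem bc1_summingBasis_c0 : bc1 summingBasis = 1 := by
  refine le_antisymm
    (bc1_le fun a ha => ca_le_of_norm_sub_le (norm_sub_partialSums_summingBasis_le_one ha)) ?_
  have hsucc (n : ℕ) : ‖∑ i ∈ Finset.range (n + 1), (-1 : ℝ) ^ i • summingBasis i -
      ∑ i ∈ Finset.range n, (-1 : ℝ) ^ i • summingBasis i‖ = 1 := by
    rw [Finset.sum_range_succ, add_sub_cancel_left, norm_smul, norm_pow, norm_neg, norm_one,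
      one_pow, one_mul, norm_summingBasis]
  calc (1 : ℝ)
      ≤ ca (fun n => ∑ i ∈ Finset.range n, (-1 : ℝ) ^ i • summingBasis i) :=
        le_ca_of_frequently
          (norm_sub_partialSums_summingBasis_le_one norm_partialSum_alternating_summingBasis_le_one)
          fun n => ⟨n + 1, n.le_succ, n, le_rfl, (hsucc n).ge⟩
    _ ≤ bc1 summingBasis := le_bc1 norm_partialSum_alternating_summingBasis_le_one
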